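/- Guaranteed lower eigenvalue bound (Theorem 3.2, abstract form): Assume conditions (A), (B) and (C) hold with constants α > 0 and β > 0, and let λ_h ≥ 0 be a j-th discrete min-max bound. Then min{1, 1/(α + β·λ_h)}·λ_h ≤ λ(j). -/
import Mathlib

lemma bilin_diag_sum {V : Type*} [AddCommGroup V] [Module ℝ V]
    (c : V →ₗ[ℝ] V →ₗ[ℝ] ℝ) {n : ℕ} (u : Fin n → V) (g : Fin n → ℝ)
    (horth : ∀ i k, i ≠ k → c (u i) (u k) = 0) :
    c (∑ i, g i • u i) (∑ i, g i • u i) = ∑ i, g i * g i * c (u i) (u i) := by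
  simp only [map_sum, LinearMap.sum_apply, map_smul, LinearMap.smul_apply, smul_eq_mul,
    Finset.mul_sum]
  refine Finset.sum_congr rfl fun i _ => ?_
  rw [Finset.sum_eq_single i]
  · ring
  · intro k _ hk
    rw [horth k i hk]
    ring
  · intro h; exact absurd (Finset.mem_univ i) h

set_option maxHeartbeats 1000000 in
/-- Guaranteed lower eigenvalue bound (Theorem 3.2, abstract form):
Assume conditions (A), (B) and (C) hold with constants `α > 0` and `β > 0`, and let
`λ_h ≥ 0` be a `j`-th discrete min-max bound. Then
`min{1, 1/(α + β·λ_h)}·λ_h ≤ λ(j)`. -/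
theorem guaranteed_lower_eigenvalue_bound
    {V : Type*} [AddCommGroup V] [Module ℝ V]
    {Vh : Type*} [AddCommGroup Vh] [Module ℝ Vh] [FiniteDimensional ℝ Vh]
    (a b : V →ₗ[ℝ] V →ₗ[ℝ] ℝ)
    (ha_symm : ∀ x y, a x y = a y x) (hb_symm : ∀ x y, b x y = b y x)
    (ah sh bh : Vh →ₗ[ℝ] Vh →ₗ[ℝ] ℝ)
    (hah_symm : ∀ x y, ah x y = ah y x) (hsh_symm : ∀ x y, sh x y = sh y x)
    (hbh_symm : ∀ x y, bh x y = bh y x)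
    (hah_pos : ∀ x, 0 ≤ ah x x) (hsh_pos : ∀ x, 0 ≤ sh x x) (hbh_pos : ∀ x, 0 ≤ bh x x)
    (Ih : V →ₗ[ℝ] Vh)
    (D : V → ℝ) (hD : ∀ v, 0 ≤ D v)
    (j : ℕ) (hj : 1 ≤ j)
    (u : Fin j → V) (lam : Fin j → ℝ) (hlam : Monotone lam)
    (hnorm : ∀ i, b (u i) (u i) = 1)
    (heig : ∀ i, a (u i) (u i) = lam i)
    (horth_a : ∀ i k, i ≠ k → a (u i) (u k) = 0)
    (horth_b : ∀ i k, i ≠ k → b (u i) (u k) = 0)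
    (α β : ℝ) (hα : 0 < α) (hβ : 0 < β)
    (hA : ∀ v ∈ Submodule.span ℝ (Set.range u),
      ah (Ih v) (Ih v) ≤ a v v - (D v) ^ 2)
    (hB : ∀ v ∈ Submodule.span ℝ (Set.range u),
      sh (Ih v) (Ih v) ≤ α * (D v) ^ 2)
    (hC : ∀ v ∈ Submodule.span ℝ (Set.range u),
      b v v - β * (D v) ^ 2 ≤ bh (Ih v) (Ih v))
    (lamh : ℝ) (hlamh : 0 ≤ lamh)
    (hminmax : ∀ Wh : Submodule ℝ Vh, Module.finrank ℝ Wh = j →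
      ∃ wh ∈ Wh, wh ≠ 0 ∧ lamh * bh wh wh ≤ ah wh wh + sh wh wh) :
    min 1 (1 / (α + β * lamh)) * lamh ≤ lam ⟨j - 1, by omega⟩ := by
  set M : Fin j := ⟨j - 1, by omega⟩ with hM
  set c : ℝ := α + β * lamh with hc
  have hc0 : 0 < c := by positivity
  -- basic facts for an arbitrary coefficient vector g
  have hmem : ∀ g : Fin j → ℝ, (∑ i, g i • u i) ∈ Submodule.span ℝ (Set.range u) := by
    intro g
    exact Submodule.sum_mem _ fun i _ =>
      Submodule.smul_mem _ _ (Submodule.subset_span (Set.mem_range_self i))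
  have hbvv : ∀ g : Fin j → ℝ, b (∑ i, g i • u i) (∑ i, g i • u i) = ∑ i, g i * g i := by
    intro g
    rw [bilin_diag_sum b u g horth_b]
    exact Finset.sum_congr rfl fun i _ => by rw [hnorm i]; ring
  have havv : ∀ g : Fin j → ℝ,
      a (∑ i, g i • u i) (∑ i, g i • u i) = ∑ i, g i * g i * lam i := by
    intro g
    rw [bilin_diag_sum a u g horth_a]
    exact Finset.sum_congr rfl fun i _ => by rw [heig i]
  have hbpos : ∀ g : Fin j → ℝ, g ≠ 0 →
      0 < b (∑ i, g i • u i) (∑ i, g i • u i) := by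
    intro g hg
    rw [hbvv g]
    obtain ⟨i, hi⟩ : ∃ i, g i ≠ 0 := by
      by_contra h
      push_neg at h
      exact hg (funext h)
    refine Finset.sum_pos' (fun k _ => mul_self_nonneg _) ⟨i, Finset.mem_univ i, ?_⟩
    exact mul_self_pos.mpr hi
  have haleb : ∀ g : Fin j → ℝ,
      a (∑ i, g i • u i) (∑ i, g i • u i) ≤ lam M * b (∑ i, g i • u i) (∑ i, g i • u i) := by
    intro g
    rw [havv g, hbvv g, Finset.mul_sum]
    refine Finset.sum_le_sum fun i _ => ?_
    have h1 : lam i ≤ lam M := hlam (by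
      have := i.isLt
      simp only [hM]
      exact Fin.mk_le_mk.mpr (by omega))
    nlinarith [mul_self_nonneg (g i)]
  -- main case split
  by_cases hli : LinearIndependent ℝ (fun i => Ih (u i))
  · -- injective case: use the min-max bound on the span of Ih (u i)
    obtain ⟨wh, hwhmem, hwhne, hineq⟩ := hminmax (Submodule.span ℝ (Set.range fun i => Ih (u i)))
      (by rw [finrank_span_eq_card hli, Fintype.card_fin])
    rw [Submodule.mem_span_range_iff_exists_fun] at hwhmem
    obtain ⟨g, hg⟩ := hwhmem
    set v : V := ∑ i, g i • u i with hv
    have hIv : Ih v = wh := by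
      rw [hv, map_sum]
      simpa [map_smul] using hg
    have hgne : g ≠ 0 := by
      intro h
      apply hwhne
      rw [← hg, h]
      simp
    have hB0 : 0 < b v v := hbpos g hgne
    have hvmem := hmem g
    have hA' := hA v hvmem
    have hB' := hB v hvmem
    have hC' := hC v hvmem
    rw [hIv] at hA' hB' hC'
    have hab : a v v ≤ lam M * b v v := haleb g
    have hD2a : (D v) ^ 2 ≤ a v v := by nlinarith [hah_pos wh]
    have hkey : lamh * b v v ≤ a v v + (c - 1) * (D v) ^ 2 := by
      have h1 : lamh * (b v v - β * (D v) ^ 2) ≤ lamh * bh wh wh :=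
        mul_le_mul_of_nonneg_left hC' hlamh
      have h2 : ah wh wh + sh wh wh ≤ (a v v - (D v) ^ 2) + α * (D v) ^ 2 := by
        linarith
      simp only [hc]
      nlinarith
    rcases le_or_gt c 1 with hle | hlt
    · have hmin : min 1 (1 / c) = 1 := min_eq_left (by rw [le_div_iff₀ hc0]; linarith)
      rw [hmin, one_mul]
      nlinarith [sq_nonneg (D v)]
    · have hmin : min 1 (1 / c) = 1 / c := min_eq_right (by
        rw [div_le_one hc0]; exact hlt.le)
      rw [hmin]
      have h3 : lamh ≤ c * lam M := by
        nlinarith [sq_nonneg (D v)]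
      rw [div_mul_eq_mul_div, one_mul, div_le_iff₀ hc0]
      nlinarith
  · -- non-injective case: kernel vector gives 1/β ≤ lam M
    rw [Fintype.not_linearIndependent_iff] at hli
    obtain ⟨g, hgsum, i0, hi0⟩ := hli
    set v : V := ∑ i, g i • u i with hv
    have hIv : Ih v = 0 := by
      rw [hv, map_sum]
      simpa [map_smul] using hgsum
    have hgne : g ≠ 0 := fun h => hi0 (by rw [h]; rfl)
    have hB0 : 0 < b v v := hbpos g hgne
    have hvmem := hmem g
    have hA' := hA v hvmem
    have hC' := hC v hvmem
    rw [hIv] at hA' hC'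
    simp only [map_zero, LinearMap.zero_apply] at hA' hC'
    have hab : a v v ≤ lam M * b v v := haleb g
    have hlamM : 1 / β ≤ lam M := by
      have hd2 : (D v) ^ 2 ≤ a v v := by linarith
      have h1 : b v v ≤ β * a v v := by nlinarith
      have h2 : β * a v v ≤ β * (lam M * b v v) := mul_le_mul_of_nonneg_left hab hβ.le
      rw [div_le_iff₀ hβ]
      nlinarith
    have h1 : min 1 (1 / c) * lamh ≤ 1 / c * lamh :=
      mul_le_mul_of_nonneg_right (min_le_right _ _) hlamh
    have h2 : 1 / c * lamh ≤ 1 / β := by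
      rw [div_mul_eq_mul_div, one_mul, div_le_div_iff₀ hc0 hβ, hc]
      nlinarith
    linarith
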